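/- For real numbers a, b > 0, the function φ ↦ aφ + b/φ on (0,∞) attains its unique minimum at φ = √(b/a), with minimum value 2√(ab). Consequently, for a symmetric positive definite Σ and orthonormal basis {u_i}, the symmetrized Stein loss tr(Σ̂Σ⁻¹ + Σ̂⁻¹Σ − 2I) over estimators Σ̂ = Σ_i φ_i u_iu_iᵀ with φ_i > 0 is minimized by φ_i = √((u_iᵀΣu_i)/(u_iᵀΣ⁻¹u_i)), with minimum value 2Σ_i √((u_iᵀΣ⁻¹u_i)(u_iᵀΣu_i)) − 2p. -/

import Mathlib

/-!
The scalar problem is governed by the identity `aφ + b/φ - 2√(ab) = (a/φ)(φ - √(b/a))²`, which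
gives the lower bound, its value at `√(b/a)` and uniqueness at once. With `U` the matrix of rows
`uᵢ`, orthonormality gives `UUᵀ = UᵀU = 1`, so `Σ̂ = Uᵀ diag(ψ) U` has inverse `Uᵀ diag(ψ⁻¹) U` and
the loss becomes `∑ᵢ (aᵢψᵢ + bᵢ/ψᵢ) - 2p` with `aᵢ = uᵢᵀΣ⁻¹uᵢ > 0` and `bᵢ = uᵢᵀΣuᵢ > 0`; it is
then minimized coordinatewise.
-/

open Matrix

section Scalar

variable {a b : ℝ}

lemma sqrt_mul_eq_mul_sqrt_div (ha : 0 < a) :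
    √(a * b) = a * √(b / a) := by
  rw [← Real.sqrt_sq ha.le, ← Real.sqrt_mul (sq_nonneg a), Real.sqrt_sq ha.le]
  congr 1
  field_simp

lemma add_div_sub_two_sqrt_mul (ha : 0 < a) (hb : 0 ≤ b) {φ : ℝ} (hφ : φ ≠ 0) :
    a * φ + b / φ - 2 * √(a * b) = a / φ * (φ - √(b / a)) ^ 2 := by
  have hsq : a * √(b / a) ^ 2 = b := by
    rw [Real.sq_sqrt (div_nonneg hb ha.le)]
    field_simp
  rw [sqrt_mul_eq_mul_sqrt_div ha]
  field_simp
  linear_combination -hsq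

lemma two_sqrt_mul_le_add_div (ha : 0 < a) (hb : 0 ≤ b) {φ : ℝ} (hφ : 0 < φ) :
    2 * √(a * b) ≤ a * φ + b / φ := by
  have := add_div_sub_two_sqrt_mul ha hb hφ.ne'
  have : 0 ≤ a / φ * (φ - √(b / a)) ^ 2 := by positivity
  linarith

lemma add_div_sqrt_div (ha : 0 < a) (hb : 0 < b) :
    a * √(b / a) + b / √(b / a) = 2 * √(a * b) := by
  have hs : √(b / a) ≠ 0 := (Real.sqrt_pos.mpr (div_pos hb ha)).ne'
  have h := add_div_sub_two_sqrt_mul ha hb.le hs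
  rwa [sub_self, zero_pow two_ne_zero, mul_zero, sub_eq_zero] at h

lemma eq_sqrt_div_of_add_div_eq (ha : 0 < a) (hb : 0 ≤ b) {φ : ℝ} (hφ : 0 < φ)
    (h : a * φ + b / φ = 2 * √(a * b)) : φ = √(b / a) := by
  have hdefect := add_div_sub_two_sqrt_mul ha hb hφ.ne'
  rw [h, sub_self, eq_comm, mul_eq_zero] at hdefect
  rcases hdefect with h0 | h0
  · exact absurd h0 (div_pos ha hφ).ne'
  · exact sub_eq_zero.mp (pow_eq_zero_iff two_ne_zero |>.mp h0)

end Scalar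

section SpectralSum

variable {ι : Type*} [Fintype ι]

lemma trace_sum_smul_vecMulVec_mul {R : Type*} [CommSemiring R]
    (u : ι → ι → R) (ψ : ι → R) (A : Matrix ι ι R) :
    trace ((∑ i, ψ i • vecMulVec (u i) (u i)) * A) = ∑ i, ψ i * (u i ⬝ᵥ A *ᵥ u i) := by
  simp only [Finset.sum_mul, trace_sum, smul_mul, trace_smul, vecMulVec_mul, trace_vecMulVec,
    dotProduct_mulVec, dotProduct_comm (u _ ᵥ* A), smul_eq_mul]

variable [DecidableEq ι]

lemma sum_smul_vecMulVec_eq_transpose_mul_diagonal_mul {R : Type*} [CommSemiring R]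
    (u : ι → ι → R) (ψ : ι → R) :
    ∑ i, ψ i • vecMulVec (u i) (u i) = (of u)ᵀ * diagonal ψ * of u := by
  ext a b
  simp [Matrix.sum_apply, mul_apply, diagonal_apply, vecMulVec_apply, mul_comm,
    mul_left_comm]

variable {K : Type*} [Field K] {u : ι → ι → K}

lemma of_mul_transpose_of_eq_one (hu : ∀ i j, u i ⬝ᵥ u j = if i = j then 1 else 0) :
    of u * (of u)ᵀ = 1 := by
  ext i j
  simpa [mul_apply, dotProduct, one_apply] using hu i j

lemma inv_sum_smul_vecMulVec (hu : ∀ i j, u i ⬝ᵥ u j = if i = j then 1 else 0)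
    {ψ : ι → K} (hψ : ∀ i, ψ i ≠ 0) :
    (∑ i, ψ i • vecMulVec (u i) (u i))⁻¹ = ∑ i, (ψ i)⁻¹ • vecMulVec (u i) (u i) := by
  have hU := of_mul_transpose_of_eq_one hu
  have hUt : (of u)ᵀ * of u = 1 := mul_eq_one_comm.mp hU
  have hD : diagonal ψ * diagonal (fun i ↦ (ψ i)⁻¹) = 1 := by
    rw [diagonal_mul_diagonal, ← diagonal_one]
    exact congrArg diagonal (funext fun i ↦ mul_inv_cancel₀ (hψ i))
  apply inv_eq_right_inv
  simp only [sum_smul_vecMulVec_eq_transpose_mul_diagonal_mul, Matrix.mul_assoc]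
  rw [← Matrix.mul_assoc (of u), hU, Matrix.one_mul, ← Matrix.mul_assoc (diagonal ψ), hD,
    Matrix.one_mul, hUt]

lemma trace_symmetrized_stein_loss (hu : ∀ i j, u i ⬝ᵥ u j = if i = j then 1 else 0)
    (A B : Matrix ι ι K) {ψ : ι → K} (hψ : ∀ i, ψ i ≠ 0) :
    trace ((∑ i, ψ i • vecMulVec (u i) (u i)) * A
        + (∑ i, ψ i • vecMulVec (u i) (u i))⁻¹ * B - (2 : K) • 1)
      = ∑ i, ((u i ⬝ᵥ A *ᵥ u i) * ψ i + (u i ⬝ᵥ B *ᵥ u i) / ψ i) - 2 * Fintype.card ι := by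
  rw [trace_sub, trace_add, inv_sum_smul_vecMulVec hu hψ, trace_sum_smul_vecMulVec_mul,
    trace_sum_smul_vecMulVec_mul, trace_smul, trace_one, ← Finset.sum_add_distrib, smul_eq_mul]
  congr 1
  refine Finset.sum_congr rfl fun i _ ↦ ?_
  rw [div_eq_inv_mul, mul_comm (ψ i)]

end SpectralSum

/-- (a) For `a, b > 0` the function `φ ↦ aφ + b/φ` on `(0,∞)` attains its unique
minimum at `φ = √(b/a)` with value `2√(ab)`.  (b) Consequently, the symmetrized Stein
loss `tr(Σ̂Σ⁻¹ + Σ̂⁻¹Σ - 2I)` over invariant estimators `Σ̂ = ∑ ψᵢ uᵢuᵢᵀ` with `ψᵢ > 0`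
is minimized by `ψᵢ = √((uᵢᵀΣuᵢ)/(uᵢᵀΣ⁻¹uᵢ))`, with minimum value
`2 ∑ √((uᵢᵀΣ⁻¹uᵢ)(uᵢᵀΣuᵢ)) - 2p`. -/
theorem statement7 (p : ℕ) (S : Matrix (Fin p) (Fin p) ℝ) (hS : S.PosDef)
    (u : Fin p → Fin p → ℝ)
    (hu : ∀ i j, u i ⬝ᵥ u j = if i = j then (1 : ℝ) else 0)
    (loss : (Fin p → ℝ) → ℝ)
    (hloss : ∀ ψ, loss ψ =
      Matrix.trace ((∑ i, ψ i • vecMulVec (u i) (u i)) * S⁻¹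
        + (∑ i, ψ i • vecMulVec (u i) (u i))⁻¹ * S
        - (2 : ℝ) • (1 : Matrix (Fin p) (Fin p) ℝ)))
    (φopt : Fin p → ℝ)
    (hφopt : ∀ i, φopt i = Real.sqrt ((u i ⬝ᵥ S *ᵥ u i) / (u i ⬝ᵥ S⁻¹ *ᵥ u i))) :
    -- (a) the scalar minimization
    (∀ a b : ℝ, 0 < a → 0 < b →
      (∀ φ : ℝ, 0 < φ → 2 * Real.sqrt (a * b) ≤ a * φ + b / φ)
      ∧ a * Real.sqrt (b / a) + b / Real.sqrt (b / a) = 2 * Real.sqrt (a * b)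
      ∧ (∀ φ : ℝ, 0 < φ → a * φ + b / φ = 2 * Real.sqrt (a * b) →
          φ = Real.sqrt (b / a)))
    -- (b) the matrix consequence
    ∧ (∀ ψ : Fin p → ℝ, (∀ i, 0 < ψ i) → loss φopt ≤ loss ψ)
    ∧ loss φopt
        = 2 * (∑ i, Real.sqrt ((u i ⬝ᵥ S⁻¹ *ᵥ u i) * (u i ⬝ᵥ S *ᵥ u i))) - 2 * p := by
  have hu0 (i : Fin p) : u i ≠ 0 := fun h ↦ by simpa [h] using hu i i
  have ha (i : Fin p) : 0 < u i ⬝ᵥ S⁻¹ *ᵥ u i := hS.inv.dotProduct_mulVec_pos (hu0 i)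
  have hb (i : Fin p) : 0 < u i ⬝ᵥ S *ᵥ u i := hS.dotProduct_mulVec_pos (hu0 i)
  have hloss_eq {ψ : Fin p → ℝ} (hψ : ∀ i, 0 < ψ i) : loss ψ =
      ∑ i, ((u i ⬝ᵥ S⁻¹ *ᵥ u i) * ψ i + (u i ⬝ᵥ S *ᵥ u i) / ψ i) - 2 * p := by
    rw [hloss, trace_symmetrized_stein_loss hu _ _ fun i ↦ (hψ i).ne', Fintype.card_fin]
  have hφopt_pos (i : Fin p) : 0 < φopt i := hφopt i ▸ Real.sqrt_pos.mpr (div_pos (hb i) (ha i))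
  have hmin : loss φopt
      = 2 * (∑ i, √((u i ⬝ᵥ S⁻¹ *ᵥ u i) * (u i ⬝ᵥ S *ᵥ u i))) - 2 * p := by
    rw [hloss_eq hφopt_pos, Finset.mul_sum]
    simp only [hφopt, add_div_sqrt_div (ha _) (hb _)]
  refine ⟨fun a b ha hb ↦ ⟨fun φ ↦ two_sqrt_mul_le_add_div ha hb.le, add_div_sqrt_div ha hb,
    fun φ ↦ eq_sqrt_div_of_add_div_eq ha hb.le⟩, fun ψ hψ ↦ ?_, hmin⟩
  rw [hmin, hloss_eq hψ, Finset.mul_sum]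
  gcongr with i
  exact two_sqrt_mul_le_add_div (ha i) (hb i).le (hψ i)
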